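/- Let x and y be distinct positively-valued finite payoff streams (m_x ≥ 0, m_y ≥ 0), let d be a discount function, and let H : [0,1] → ℝ be continuous and strictly increasing with H(0) = 0. Then the maximum over joint payoff functions b ∈ B(x,y) of H( |Σ_{t_x,t_y} b(t_x,t_y)·(d(t_x) − d(t_y))| / Σ_{t_x,t_y} |b(t_x,t_y)·(d(t_x) − d(t_y))| ) is attained and equals H( |DU(x) − DU(y)| / d_CPF(x,y) ), where d_CPF is the generalized CPF distance. -/

import Mathlib

open Finset

/-- A finite payoff stream: finitely many nonzero payoffs, all at times t ≥ 0. -/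
structure PayStream where
  m : ℝ →₀ ℝ
  zero_of_neg : ∀ t, t < 0 → m t = 0

namespace PayStream

/-- The cumulative payoff function M_x(t). -/
noncomputable def cumul (x : PayStream) (t : ℝ) : ℝ :=
  ∑ s ∈ x.m.support.filter (fun s => s ≤ t), x.m s

/-- Discounted utility DU(x) = Σ_t d(t)·m_x(t). -/
noncomputable def DU (d : ℝ → ℝ) (x : PayStream) : ℝ :=
  x.m.sum (fun t a => d t * a)

/-- The generalized CPF distance: the times t_0 < ⋯ < t_{n-1} enumerate the finite
points of T_x ∪ T_y ∪ {0}, and the final factor d(t_n) with t_n = ∞ equals 0. -/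
noncomputable def dCPF (d : ℝ → ℝ) (x y : PayStream) : ℝ :=
  let L := (x.m.support ∪ y.m.support ∪ {0}).sort (· ≤ ·)
  ∑ k ∈ Finset.range L.length,
    |x.cumul (L.getD k 0) - y.cumul (L.getD k 0)| *
      (d (L.getD k 0) - if k + 1 < L.length then d (L.getD (k + 1) 0) else 0)

/-- Temporal dominance: M_x(t) ≥ M_y(t) at every time. -/
def TDom (x y : PayStream) : Prop := ∀ t : ℝ, y.cumul t ≤ x.cumul t

/-- The topology of weak convergence of the associated finitely supported signed
measures: the topology induced by testing against bounded continuous functions. -/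
instance : TopologicalSpace PayStream :=
  TopologicalSpace.induced
    (fun x => fun g : BoundedContinuousFunction ℝ ℝ => x.m.sum (fun t a => a * g t))
    inferInstance

end PayStream

/-- A discount function: strictly decreasing on [0,∞], positive at finite times,
with d(∞) = 0 (encoded by positivity and strict decrease on [0,∞)). -/
def IsDiscount (d : ℝ → ℝ) : Prop :=
  StrictAntiOn d (Set.Ici 0) ∧ ∀ t ∈ Set.Ici (0:ℝ), 0 < d t

/-- Extension of a discount function to [0,∞], with d(∞) = 0. -/
noncomputable def dext (d : ℝ → ℝ) : WithTop ℝ → ℝ :=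
  WithTop.recTopCoe 0 d

/-- B(x,y): the set of joint payoff functions for two payoff streams. -/
def IsJointPayoff (x y : PayStream) (b : (WithTop ℝ × WithTop ℝ) →₀ ℝ) : Prop :=
  b (⊤, ⊤) = 0 ∧
  (∀ t : ℝ, (b.sum fun p v => if p.1 = (t : WithTop ℝ) then v else 0) = x.m t) ∧
  (∀ t : ℝ, (b.sum fun p v => if p.2 = (t : WithTop ℝ) then v else 0) = y.m t)

/-- The ease-of-comparison value of the attribute representation induced by a joint
payoff function. -/
noncomputable def jointVal (H : ℝ → ℝ) (d : ℝ → ℝ)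
    (b : (WithTop ℝ × WithTop ℝ) →₀ ℝ) : ℝ :=
  H (|b.sum fun p v => v * (dext d p.1 - dext d p.2)| /
      b.sum fun p v => |v * (dext d p.1 - dext d p.2)|)

/-!
Layer-cake representation: for `s > 0` let `Ψ(s) = Σ_t (m_x(t) - m_y(t)) 1[s ≤ d t]`. On
`(d t_{k+1}, d t_k]` it equals `M_x(t_k) - M_y(t_k)`, so `d_CPF(x, y) = ∫_{s > 0} |Ψ|`. For a
joint payoff function `b` the marginal conditions give
`Ψ(s) = Σ b(t_x, t_y) (1[s ≤ d t_x] - 1[s ≤ d t_y])` (with `d ∞ = 0`), so by the triangle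
inequality under the integral `∫ |Ψ|` is at most the denominator
`Σ |b(t_x, t_y) (d t_x - d t_y)|`, while the numerator is always `DU(x) - DU(y)`.
For nonnegative streams the greedy coupling attains this bound: if `τ_x ≤ τ_y` are the earliest
atoms and `m` the smaller of their masses, then `Ψ ≥ m` on `(d τ_y, d τ_x]`, so moving `m` from
`τ_x` to `τ_y` lowers `∫ |Ψ|` by exactly its cost `m (d τ_x - d τ_y)`. As `H` is monotone, the
maximal ease of comparison is `H` at the minimal denominator.
-/

open MeasureTheory Set

noncomputable section

def IsCoupling (b : (WithTop ℝ × WithTop ℝ) →₀ ℝ) (x y : ℝ →₀ ℝ) : Prop :=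
  b (⊤, ⊤) = 0 ∧ (∀ t : ℝ, b.mapDomain Prod.fst t = x t) ∧ ∀ t : ℝ, b.mapDomain Prod.snd t = y t

lemma isJointPayoff_iff {x y : PayStream} {b : (WithTop ℝ × WithTop ℝ) →₀ ℝ} :
    IsJointPayoff x y b ↔ IsCoupling b x.m y.m := by
  simp only [IsJointPayoff, IsCoupling, Finsupp.mapDomain, Finsupp.sum_apply, Finsupp.single_apply]

lemma Finsupp.sum_mul_comp_eq_of_mapDomain {α : Type*} {b : α →₀ ℝ} {π : α → WithTop ℝ}
    {z : ℝ →₀ ℝ} (hπ : ∀ t : ℝ, b.mapDomain π t = z t) {g : WithTop ℝ → ℝ} (hg : g ⊤ = 0) :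
    (b.sum fun p v => v * g (π p)) = z.sum fun t a => a * g t := by
  have hsplit : b.mapDomain π = z.mapDomain (↑) + Finsupp.single ⊤ (b.mapDomain π ⊤) := by
    ext j
    induction j using WithTop.recTopCoe with
    | top => simp [Finsupp.mapDomain_of_notMem_range]
    | coe t => simp [Finsupp.mapDomain_apply WithTop.coe_injective, hπ]
  rw [← Finsupp.sum_mapDomain_index (h := fun j v => v * g j) (fun _ => zero_mul _)
      (fun _ _ _ => add_mul _ _ _), hsplit,
    Finsupp.sum_add_index' (fun _ => zero_mul _) (fun _ _ _ => add_mul _ _ _),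
    Finsupp.sum_single_index (zero_mul _), hg, mul_zero, add_zero,
    Finsupp.sum_mapDomain_index_inj WithTop.coe_injective]

namespace IsCoupling

variable {b b' : (WithTop ℝ × WithTop ℝ) →₀ ℝ} {x y x' y' : ℝ →₀ ℝ}

lemma sum_mul_sub (hb : IsCoupling b x y) {g : WithTop ℝ → ℝ} (hg : g ⊤ = 0) :
    (b.sum fun p v => v * (g p.1 - g p.2)) =
      (x.sum fun t a => a * g t) - y.sum fun t a => a * g t := by
  rw [← Finsupp.sum_mul_comp_eq_of_mapDomain hb.2.1 hg,
    ← Finsupp.sum_mul_comp_eq_of_mapDomain hb.2.2 hg, ← Finsupp.sum_sub]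
  exact Finsupp.sum_congr fun _ _ => mul_sub _ _ _

lemma add (hb : IsCoupling b x y) (hb' : IsCoupling b' x' y') :
    IsCoupling (b + b') (x + x') (y + y') :=
  ⟨by simp [hb.1, hb'.1], fun t => by simp [Finsupp.mapDomain_add, hb.2.1, hb'.2.1],
    fun t => by simp [Finsupp.mapDomain_add, hb.2.2, hb'.2.2]⟩

lemma single (s t m : ℝ) :
    IsCoupling (Finsupp.single ((s : WithTop ℝ), (t : WithTop ℝ)) m)
      (Finsupp.single s m) (Finsupp.single t m) :=
  ⟨by simp, fun u => by simp [Finsupp.single_apply_left WithTop.coe_injective],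
    fun u => by simp [Finsupp.single_apply_left WithTop.coe_injective]⟩

lemma swap (hb : IsCoupling b x y) : IsCoupling (b.mapDomain Prod.swap) y x := by
  refine ⟨?_, fun t => ?_, fun t => ?_⟩
  · rw [← Prod.swap_swap (⊤, ⊤), Finsupp.mapDomain_apply Prod.swap_injective]
    exact hb.1
  · rw [← Finsupp.mapDomain_comp]; exact hb.2.2 t
  · rw [← Finsupp.mapDomain_comp]; exact hb.2.1 t

lemma mapDomain_top (x : ℝ →₀ ℝ) :
    IsCoupling (x.mapDomain fun t : ℝ => ((t : WithTop ℝ), (⊤ : WithTop ℝ))) x 0 := by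
  refine ⟨?_, fun t => ?_, fun t => ?_⟩
  · exact Finsupp.mapDomain_of_notMem_range _ _ (by simp)
  · rw [← Finsupp.mapDomain_comp]
    exact Finsupp.mapDomain_apply WithTop.coe_injective _ _
  · rw [← Finsupp.mapDomain_comp]
    exact Finsupp.mapDomain_of_notMem_range _ _ (by simp [Function.comp_def])

end IsCoupling

def transportCost (d : ℝ → ℝ) (b : (WithTop ℝ × WithTop ℝ) →₀ ℝ) : ℝ :=
  b.sum fun p v => |v * (dext d p.1 - dext d p.2)|

lemma transportCost_add_le (d : ℝ → ℝ) (b b' : (WithTop ℝ × WithTop ℝ) →₀ ℝ) :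
    transportCost d (b + b') ≤ transportCost d b + transportCost d b' := by
  classical
  have h0 : ∀ p : WithTop ℝ × WithTop ℝ, |0 * (dext d p.1 - dext d p.2)| = 0 := by simp
  rw [transportCost, transportCost, transportCost,
    Finsupp.sum_of_support_subset _ Finsupp.support_add _ fun p _ => h0 p,
    Finsupp.sum_of_support_subset b subset_union_left _ fun p _ => h0 p,
    Finsupp.sum_of_support_subset b' subset_union_right _ fun p _ => h0 p, ← sum_add_distrib]
  exact sum_le_sum fun p _ => by rw [Finsupp.add_apply, add_mul]; exact abs_add_le _ _

lemma transportCost_single (d : ℝ → ℝ) (p : WithTop ℝ × WithTop ℝ) (m : ℝ) :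
    transportCost d (Finsupp.single p m) = |m * (dext d p.1 - dext d p.2)| :=
  Finsupp.sum_single_index (by simp)

lemma transportCost_mapDomain_swap (d : ℝ → ℝ) (b : (WithTop ℝ × WithTop ℝ) →₀ ℝ) :
    transportCost d (b.mapDomain Prod.swap) = transportCost d b := by
  rw [transportCost, Finsupp.sum_mapDomain_index_inj Prod.swap_injective]
  exact Finsupp.sum_congr fun p _ => by rw [Prod.fst_swap, Prod.snd_swap, abs_mul, abs_mul,
    abs_sub_comm]

lemma transportCost_mapDomain_top (d : ℝ → ℝ) (x : ℝ →₀ ℝ) :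
    transportCost d (x.mapDomain fun t : ℝ => ((t : WithTop ℝ), (⊤ : WithTop ℝ))) =
      x.sum fun t a => |a * d t| := by
  rw [transportCost, Finsupp.sum_mapDomain_index_inj fun _ _ h => WithTop.coe_injective
    (congrArg Prod.fst h)]
  simp [dext]

lemma abs_sum_mul_dext_sub_le_transportCost (d : ℝ → ℝ) (b : (WithTop ℝ × WithTop ℝ) →₀ ℝ) :
    |b.sum fun p v => v * (dext d p.1 - dext d p.2)| ≤ transportCost d b :=
  abs_sum_le_sum_abs _ _

lemma IsCoupling.sum_mul_dext_sub {x y : PayStream} {b : (WithTop ℝ × WithTop ℝ) →₀ ℝ}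
    (hb : IsCoupling b x.m y.m) (d : ℝ → ℝ) :
    (b.sum fun p v => v * (dext d p.1 - dext d p.2)) = PayStream.DU d x - PayStream.DU d y := by
  rw [hb.sum_mul_sub (g := dext d) rfl, PayStream.DU, PayStream.DU]
  simp only [dext, WithTop.recTopCoe_coe, mul_comm]

def layer (d : ℝ → ℝ) : (ℝ →₀ ℝ) →ₗ[ℝ] ℝ → ℝ :=
  Finsupp.linearCombination ℝ fun t => (Ioc 0 (d t)).indicator 1

lemma layer_apply (d : ℝ → ℝ) (z : ℝ →₀ ℝ) (s : ℝ) :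
    layer d z s = z.sum fun t a => a * (Ioc 0 (d t)).indicator 1 s := by
  simp only [layer, Finsupp.linearCombination_apply, Finsupp.sum, Finset.sum_apply, Pi.smul_apply,
    smul_eq_mul]

def cpfIntegral (d : ℝ → ℝ) (z : ℝ →₀ ℝ) : ℝ :=
  ∫ s in Ioi 0, |layer d z s|

lemma integrable_indicator_Ioc_one (a c : ℝ) (S : Set ℝ) :
    Integrable ((Ioc a c).indicator (1 : ℝ → ℝ)) (volume.restrict S) :=
  (integrable_indicator_iff measurableSet_Ioc).2 <| integrableOn_const <|
    ((Measure.restrict_apply measurableSet_Ioc).trans_le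
      (measure_mono inter_subset_left)).trans_lt measure_Ioc_lt_top |>.ne

lemma integrableOn_layer (d : ℝ → ℝ) (z : ℝ →₀ ℝ) : IntegrableOn (layer d z) (Ioi 0) := by
  have : layer d z = fun s => ∑ t ∈ z.support, z t * (Ioc 0 (d t)).indicator 1 s :=
    funext (layer_apply d z)
  rw [this]
  exact integrable_finsetSum _ fun t _ => (integrable_indicator_Ioc_one _ _ _).const_mul _

lemma setIntegral_Ioi_zero_indicator_Ioc {a c : ℝ} (ha : 0 ≤ a) (hac : a ≤ c) :
    ∫ s in Ioi 0, (Ioc a c).indicator (1 : ℝ → ℝ) s = c - a := by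
  rw [integral_indicator_one measurableSet_Ioc, measureReal_restrict_apply measurableSet_Ioc,
    (inter_eq_left.2 fun s (hs : s ∈ Ioc a c) => ha.trans_lt hs.1 : Ioc a c ∩ Ioi 0 = Ioc a c),
    Real.volume_real_Ioc_of_le hac]

lemma integral_layer (d : ℝ → ℝ) (z : ℝ →₀ ℝ) (hz : ∀ t ∈ z.support, 0 ≤ d t) :
    ∫ s in Ioi 0, layer d z s = z.sum fun t a => a * d t := by
  simp_rw [layer_apply, Finsupp.sum]
  rw [integral_finsetSum _ fun t _ => (integrable_indicator_Ioc_one _ _ _).const_mul _]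
  refine sum_congr rfl fun t ht => ?_
  rw [integral_const_mul, setIntegral_Ioi_zero_indicator_Ioc le_rfl (hz t ht), sub_zero]

lemma cpfIntegral_neg (d : ℝ → ℝ) (z : ℝ →₀ ℝ) : cpfIntegral d (-z) = cpfIntegral d z := by
  simp only [cpfIntegral, map_neg, Pi.neg_apply, abs_neg]

lemma setIntegral_Ioi_zero_abs_indicator_sub_le (a c : ℝ) :
    ∫ s in Ioi 0, |(Ioc 0 a).indicator (1 : ℝ → ℝ) s - (Ioc 0 c).indicator 1 s| ≤ |a - c| := by
  wlog hac : a ≤ c generalizing a c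
  · simpa only [abs_sub_comm] using this c a (le_of_not_ge hac)
  have hpt : ∀ s, |(Ioc 0 a).indicator (1 : ℝ → ℝ) s - (Ioc 0 c).indicator 1 s| ≤
      (Ioc a c).indicator 1 s := by
    intro s
    simp only [indicator_apply, Set.mem_Ioc, Pi.one_apply]
    split_ifs <;> norm_num <;> grind
  calc _ ≤ ∫ s in Ioi 0, (Ioc a c).indicator (1 : ℝ → ℝ) s :=
        integral_mono_of_nonneg (ae_of_all _ fun _ => abs_nonneg _)
          (integrable_indicator_Ioc_one _ _ _) (ae_of_all _ hpt)
    _ = volume.real (Ioc a c ∩ Ioi 0) := by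
        rw [integral_indicator_one measurableSet_Ioc, measureReal_restrict_apply measurableSet_Ioc]
    _ ≤ volume.real (Ioc a c) := measureReal_mono inter_subset_left measure_Ioc_lt_top.ne
    _ = |a - c| := by rw [Real.volume_real_Ioc_of_le hac, abs_sub_comm, abs_of_nonneg (by linarith)]

lemma IsCoupling.cpfIntegral_le_transportCost {b : (WithTop ℝ × WithTop ℝ) →₀ ℝ}
    {x y : ℝ →₀ ℝ} (hb : IsCoupling b x y) (d : ℝ → ℝ) :
    cpfIntegral d (x - y) ≤ transportCost d b := by
  set ι : WithTop ℝ → ℝ → ℝ := fun j => (Ioc 0 (dext d j)).indicator 1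
  have hlayer : ∀ s, layer d (x - y) s = b.sum fun p v => v * (ι p.1 s - ι p.2 s) := fun s => by
    rw [hb.sum_mul_sub (g := fun j => ι j s) (by simp [ι, dext]), map_sub, Pi.sub_apply,
      layer_apply, layer_apply]
    rfl
  have hint : ∀ p : WithTop ℝ × WithTop ℝ,
      Integrable (fun s => |b p| * |ι p.1 s - ι p.2 s|) (volume.restrict (Ioi 0)) := fun p =>
    ((integrable_indicator_Ioc_one _ _ _).sub (integrable_indicator_Ioc_one _ _ _)).abs.const_mul _
  calc cpfIntegral d (x - y) = ∫ s in Ioi 0, |b.sum fun p v => v * (ι p.1 s - ι p.2 s)| := by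
        simp_rw [cpfIntegral, hlayer]
    _ ≤ ∫ s in Ioi 0, b.sum fun p v => |v| * |ι p.1 s - ι p.2 s| :=
        integral_mono_of_nonneg (ae_of_all _ fun _ => abs_nonneg _)
          (integrable_finsetSum _ fun p _ => hint p)
          (ae_of_all _ fun _ => (abs_sum_le_sum_abs _ _).trans_eq (by simp only [abs_mul]; rfl))
    _ = b.sum fun p v => |v| * ∫ s in Ioi 0, |ι p.1 s - ι p.2 s| := by
        simp only [Finsupp.sum]
        rw [integral_finsetSum _ fun p _ => hint p]
        simp_rw [integral_const_mul]
    _ ≤ transportCost d b := sum_le_sum fun p _ => by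
        dsimp only
        rw [abs_mul]
        exact mul_le_mul_of_nonneg_left (setIntegral_Ioi_zero_abs_indicator_sub_le _ _)
          (abs_nonneg _)

lemma layer_single (d : ℝ → ℝ) (τ m : ℝ) :
    layer d (Finsupp.single τ m) = m • (Ioc 0 (d τ)).indicator 1 :=
  Finsupp.linearCombination_single ℝ m τ

lemma layer_eq_zero_of_lt {d : ℝ → ℝ} {z : ℝ →₀ ℝ} {s : ℝ} (h : ∀ t ∈ z.support, d t < s) :
    layer d z s = 0 := by
  rw [layer_apply]
  exact sum_eq_zero fun t ht =>
    mul_eq_zero_of_right _ (indicator_of_notMem (fun hs => (h t ht).not_ge hs.2) _)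

lemma mul_indicator_le_layer {d : ℝ → ℝ} {z : ℝ →₀ ℝ} (hz : ∀ t, 0 ≤ z t) (τ s : ℝ) :
    z τ * (Ioc 0 (d τ)).indicator 1 s ≤ layer d z s := by
  classical
  have hind : ∀ t, 0 ≤ (Ioc 0 (d t)).indicator (1 : ℝ → ℝ) s :=
    fun t => indicator_nonneg (fun _ _ => zero_le_one) s
  rw [layer_apply, Finsupp.sum_of_support_subset z (subset_insert τ _) _ (by simp)]
  exact single_le_sum (f := fun t => z t * (Ioc 0 (d t)).indicator 1 s)
    (fun t _ => mul_nonneg (hz t) (hind t)) (mem_insert_self τ _)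

lemma indicator_Ioc_sub_indicator_Ioc {a c : ℝ} (ha : 0 ≤ a) (hac : a ≤ c) (s : ℝ) :
    (Ioc 0 c).indicator (1 : ℝ → ℝ) s - (Ioc 0 a).indicator 1 s = (Ioc a c).indicator 1 s := by
  simp only [indicator_apply, Set.mem_Ioc, Pi.one_apply]
  split_ifs <;> norm_num <;> grind

lemma setIntegral_abs_eq_abs_sub_indicator_add {f : ℝ → ℝ} (hf : IntegrableOn f (Ioi 0)) {a c m : ℝ}
    (ha : 0 ≤ a) (hac : a ≤ c) (hm : 0 ≤ m) (hfm : ∀ s ∈ Ioc a c, m ≤ f s) :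
    ∫ s in Ioi 0, |f s| = (∫ s in Ioi 0, |f s - m * (Ioc a c).indicator 1 s|) + m * (c - a) := by
  have hpt : ∀ s, |f s| = |f s - m * (Ioc a c).indicator 1 s| + m * (Ioc a c).indicator 1 s := by
    intro s
    by_cases hs : s ∈ Ioc a c
    · have := hfm s hs
      rw [indicator_of_mem hs, Pi.one_apply, mul_one, abs_of_nonneg (by linarith),
        abs_of_nonneg (by linarith), sub_add_cancel]
    · rw [indicator_of_notMem hs, mul_zero, sub_zero, add_zero]
  have hind := (integrable_indicator_Ioc_one a c (Ioi 0)).const_mul m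
  have habs : IntegrableOn (fun s => |f s - m * (Ioc a c).indicator 1 s|) (Ioi 0) :=
    (hf.sub hind).abs
  calc ∫ s in Ioi 0, |f s|
      = ∫ s in Ioi 0, (|f s - m * (Ioc a c).indicator 1 s| + m * (Ioc a c).indicator 1 s) := by
        simp_rw [← hpt]
    _ = _ := by
        rw [integral_add habs hind, integral_const_mul,
          setIntegral_Ioi_zero_indicator_Ioc ha hac]

lemma cpfIntegral_eq_sub_single_add {d : ℝ → ℝ} (hd : IsDiscount d) {x y : ℝ →₀ ℝ}
    (hx : ∀ t, 0 ≤ x t) {τx τy m : ℝ} (hτx : 0 ≤ τx) (hle : τx ≤ τy)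
    (hmin : ∀ t ∈ y.support, τy ≤ t) (hm : 0 ≤ m) (hmx : m ≤ x τx) :
    cpfIntegral d (x - y) =
      cpfIntegral d ((x - Finsupp.single τx m) - (y - Finsupp.single τy m)) +
        m * (d τx - d τy) := by
  have hτy : 0 ≤ τy := hτx.trans hle
  have hdy : 0 ≤ d τy := (hd.2 τy hτy).le
  have hdle : d τy ≤ d τx := hd.1.antitoneOn hτx hτy hle
  have hlayer : ∀ s, layer d ((x - Finsupp.single τx m) - (y - Finsupp.single τy m)) s =
      layer d (x - y) s - m * (Ioc (d τy) (d τx)).indicator 1 s := by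
    intro s
    rw [sub_sub_sub_comm, map_sub (layer d) (x - y), Pi.sub_apply,
      map_sub (layer d) (Finsupp.single τx m), Pi.sub_apply, layer_single, layer_single,
      Pi.smul_apply, Pi.smul_apply, smul_eq_mul, smul_eq_mul, ← mul_sub,
      indicator_Ioc_sub_indicator_Ioc hdy hdle]
  -- Past `d τy` no `y`-atom is counted any more, while the atom of `x` at `τx` still is.
  have hge : ∀ s ∈ Ioc (d τy) (d τx), m ≤ layer d (x - y) s := by
    intro s hs
    have hy0 : layer d y s = 0 := layer_eq_zero_of_lt fun t ht =>
      (hd.1.antitoneOn hτy (hτy.trans (hmin t ht)) (hmin t ht)).trans_lt hs.1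
    calc m ≤ x τx * (Ioc 0 (d τx)).indicator 1 s := by
          rw [indicator_of_mem (Set.mem_Ioc.2 ⟨hdy.trans_lt hs.1, hs.2⟩), Pi.one_apply, mul_one]
          exact hmx
      _ ≤ layer d (x - y) s := by
          rw [map_sub, Pi.sub_apply, hy0, sub_zero]
          exact mul_indicator_le_layer hx τx s
  rw [cpfIntegral,
    setIntegral_abs_eq_abs_sub_indicator_add (integrableOn_layer d _) hdy hdle hm hge]
  simp only [cpfIntegral, hlayer]

def IsNonnegStream (z : ℝ →₀ ℝ) : Prop :=
  (∀ t, 0 ≤ z t) ∧ ∀ t < 0, z t = 0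

namespace IsNonnegStream

variable {z : ℝ →₀ ℝ}

lemma nonneg_of_mem_support (hz : IsNonnegStream z) {t : ℝ} (ht : t ∈ z.support) : 0 ≤ t :=
  not_lt.1 fun h => Finsupp.mem_support_iff.1 ht (hz.2 t h)

lemma sub_single (hz : IsNonnegStream z) {τ m : ℝ} (hτ : 0 ≤ τ) (hm : m ≤ z τ) :
    IsNonnegStream (z - Finsupp.single τ m) := by
  refine ⟨fun t => ?_, fun t ht => ?_⟩
  · rcases eq_or_ne τ t with rfl | h
    · simpa using hm
    · simpa [Finsupp.single_apply, h] using hz.1 t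
  · simp [hz.2 t ht, (ht.trans_le hτ).ne]

end IsNonnegStream

lemma Finsupp.support_sub_single_subset {z : ℝ →₀ ℝ} {τ : ℝ} (hτ : τ ∈ z.support) (m : ℝ) :
    (z - Finsupp.single τ m).support ⊆ z.support :=
  Finsupp.support_sub.trans <|
    union_subset subset_rfl (Finsupp.support_single_subset.trans (singleton_subset_iff.2 hτ))

lemma Finsupp.card_support_sub_single_self_lt {z : ℝ →₀ ℝ} {τ : ℝ} (hτ : τ ∈ z.support) :
    #(z - Finsupp.single τ (z τ)).support < #z.support := by
  classical
  rw [← Finsupp.erase_eq_sub_single, Finsupp.support_erase]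
  exact card_erase_lt_of_mem hτ

def HasCouplingWithinCPF (d : ℝ → ℝ) (x y : ℝ →₀ ℝ) : Prop :=
  ∃ b, IsCoupling b x y ∧ transportCost d b ≤ cpfIntegral d (x - y)

namespace HasCouplingWithinCPF

variable {d : ℝ → ℝ} {x y : ℝ →₀ ℝ}

lemma symm (h : HasCouplingWithinCPF d y x) : HasCouplingWithinCPF d x y := by
  obtain ⟨b, hb, hcost⟩ := h
  refine ⟨b.mapDomain Prod.swap, hb.swap, ?_⟩
  rwa [transportCost_mapDomain_swap, ← neg_sub, cpfIntegral_neg]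

lemma zero_right (hd : IsDiscount d) (hx : IsNonnegStream x) : HasCouplingWithinCPF d x 0 := by
  have hdx : ∀ t ∈ x.support, 0 < d t := fun t ht => hd.2 t (hx.nonneg_of_mem_support ht)
  refine ⟨_, IsCoupling.mapDomain_top x, ?_⟩
  calc transportCost d _ = x.sum fun t a => a * d t := by
        rw [transportCost_mapDomain_top]
        exact Finsupp.sum_congr fun t ht => abs_of_nonneg (mul_nonneg (hx.1 t) (hdx t ht).le)
    _ = ∫ s in Ioi 0, layer d x s := (integral_layer d x fun t ht => (hdx t ht).le).symm
    _ ≤ cpfIntegral d (x - 0) := by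
        rw [sub_zero]
        exact integral_mono (integrableOn_layer d x) (integrableOn_layer d x).abs
          fun s => le_abs_self _

lemma of_sub_single (hd : IsDiscount d) (hx : ∀ t, 0 ≤ x t) {τx τy m : ℝ} (hτx : 0 ≤ τx)
    (hle : τx ≤ τy) (hmin : ∀ t ∈ y.support, τy ≤ t) (hm : 0 ≤ m) (hmx : m ≤ x τx)
    (h : HasCouplingWithinCPF d (x - Finsupp.single τx m) (y - Finsupp.single τy m)) :
    HasCouplingWithinCPF d x y := by
  obtain ⟨b, hb, hcost⟩ := h
  have hΔ : 0 ≤ d τx - d τy := sub_nonneg.2 (hd.1.antitoneOn hτx (hτx.trans hle) hle)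
  refine ⟨b + Finsupp.single ((τx : WithTop ℝ), (τy : WithTop ℝ)) m,
    by simpa using hb.add (IsCoupling.single τx τy m), ?_⟩
  calc transportCost d (b + Finsupp.single ((τx : WithTop ℝ), (τy : WithTop ℝ)) m)
      ≤ transportCost d b + m * (d τx - d τy) := by
        refine (transportCost_add_le d _ _).trans_eq ?_
        rw [transportCost_single]
        exact congrArg _ (abs_of_nonneg (mul_nonneg hm hΔ))
    _ ≤ cpfIntegral d (x - y) := by
        rw [cpfIntegral_eq_sub_single_add hd hx hτx hle hmin hm hmx]
        gcongr

end HasCouplingWithinCPF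

theorem hasCouplingWithinCPF_of_isNonnegStream {d : ℝ → ℝ} (hd : IsDiscount d) {x y : ℝ →₀ ℝ}
    (hx : IsNonnegStream x) (hy : IsNonnegStream y) : HasCouplingWithinCPF d x y := by
  induction h : #x.support + #y.support using Nat.strong_induction_on generalizing x y with
  | _ n ih =>
    rcases eq_or_ne y 0 with rfl | hy0
    · exact .zero_right hd hx
    rcases eq_or_ne x 0 with rfl | hx0
    · exact (HasCouplingWithinCPF.zero_right hd hy).symm
    have hxs := Finsupp.support_nonempty_iff.2 hx0
    have hys := Finsupp.support_nonempty_iff.2 hy0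
    wlog hle : x.support.min' hxs ≤ y.support.min' hys generalizing x y
    · exact (this hy hx (by rwa [add_comm]) hx0 hy0 hys hxs (le_of_not_ge hle)).symm
    set τx := x.support.min' hxs
    set τy := y.support.min' hys
    have hτx : τx ∈ x.support := min'_mem _ _
    have hτy : τy ∈ y.support := min'_mem _ _
    have hpos : ∀ {z : ℝ →₀ ℝ} {t : ℝ}, IsNonnegStream z → t ∈ z.support → 0 < z t :=
      fun hz ht => (hz.1 _).lt_of_ne' (Finsupp.mem_support_iff.1 ht)
    set m := min (x τx) (y τy)
    have hcard : #(x - Finsupp.single τx m).support + #(y - Finsupp.single τy m).support < n := by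
      have hx' := Finset.card_le_card (Finsupp.support_sub_single_subset hτx m)
      have hy' := Finset.card_le_card (Finsupp.support_sub_single_subset hτy m)
      obtain hm | hm : m = x τx ∨ m = y τy := min_choice _ _
      · have := Finsupp.card_support_sub_single_self_lt hτx
        rw [← hm] at this
        omega
      · have := Finsupp.card_support_sub_single_self_lt hτy
        rw [← hm] at this
        omega
    have hτx0 := hx.nonneg_of_mem_support hτx
    exact .of_sub_single hd hx.1 hτx0 hle (fun t ht => min'_le _ _ ht)
      (lt_min (hpos hx hτx) (hpos hy hτy)).le (min_le_left _ _)
      (ih _ hcard (hx.sub_single hτx0 (min_le_left _ _))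
        (hy.sub_single (hy.nonneg_of_mem_support hτy) (min_le_right _ _)) rfl)

lemma setIntegral_Ioi_zero_eq_sum_of_step {f : ℝ → ℝ} {u c : ℕ → ℝ} {n : ℕ} (hu : Antitone u)
    (hun : u n = 0) (hf : IntegrableOn f (Ioi 0))
    (hstep : ∀ k < n, ∀ s ∈ Ioc (u (k + 1)) (u k), f s = c k)
    (hzero : ∀ s, u 0 < s → f s = 0) :
    ∫ s in Ioi 0, f s = ∑ k ∈ range n, c k * (u k - u (k + 1)) := by
  have hu0 : ∀ k ≤ n, 0 ≤ u k := fun k hk => hun ▸ hu hk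
  have hii : ∀ k < n, IntervalIntegrable f volume (u k) (u (k + 1)) := fun k hk =>
    (intervalIntegrable_iff.2 <| hf.mono_set fun s hs =>
      (le_min (hu0 k hk.le) (hu0 (k + 1) hk)).trans_lt hs.1)
  have hpiece : ∀ k < n, ∫ s in u (k + 1)..u k, f s = c k * (u k - u (k + 1)) := by
    intro k hk
    rw [intervalIntegral.integral_of_le (hu k.le_succ), setIntegral_congr_fun measurableSet_Ioc
      (hstep k hk), setIntegral_const, smul_eq_mul, Real.volume_real_Ioc_of_le (hu k.le_succ),
      mul_comm]
  calc ∫ s in Ioi 0, f s = ∫ s in Ioc 0 (u 0), f s :=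
        setIntegral_eq_of_subset_of_forall_sdiff_eq_zero measurableSet_Ioi
          (fun s hs => hs.1) fun s hs => hzero s (not_le.1 fun h => hs.2 ⟨hs.1, h⟩)
    _ = -∫ s in u 0..u n, f s := by
        rw [intervalIntegral.integral_symm, neg_neg, hun,
          intervalIntegral.integral_of_le (hu0 0 n.zero_le)]
    _ = ∑ k ∈ range n, c k * (u k - u (k + 1)) := by
        rw [← intervalIntegral.sum_integral_adjacent_intervals hii, ← sum_neg_distrib]
        refine sum_congr rfl fun k hk => ?_
        rw [← intervalIntegral.integral_symm, hpiece k (mem_range.1 hk)]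

lemma PayStream.nonneg_of_mem_support (x : PayStream) {t : ℝ} (ht : t ∈ x.m.support) : 0 ≤ t :=
  not_lt.1 fun h => Finsupp.mem_support_iff.1 ht (x.zero_of_neg t h)

lemma PayStream.cumul_eq_sum_filter (x : PayStream) {T : Finset ℝ} (hT : x.m.support ⊆ T)
    (w : ℝ) : x.cumul w = ∑ t ∈ T with t ≤ w, x.m t :=
  sum_subset (filter_subset_filter _ hT) fun _ ht hnot =>
    Finsupp.notMem_support_iff.1 fun h => hnot (mem_filter.2 ⟨h, (mem_filter.1 ht).2⟩)

lemma layer_eq_sum_filter (d : ℝ → ℝ) {z : ℝ →₀ ℝ} {T : Finset ℝ} (hT : z.support ⊆ T)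
    {s : ℝ} (hs : 0 < s) : layer d z s = ∑ t ∈ T with s ≤ d t, z t := by
  rw [layer_apply, Finsupp.sum_of_support_subset z hT _ (by simp), sum_filter]
  exact sum_congr rfl fun t _ => by simp [indicator_apply, hs]

section DiscountLevels

variable {d : ℝ → ℝ} {n : ℕ}

def discountLevels (d : ℝ → ℝ) (e : Fin n → ℝ) (k : ℕ) : ℝ :=
  if h : k < n then d (e ⟨k, h⟩) else 0

lemma discountLevels_fin (e : Fin n → ℝ) (j : Fin n) : discountLevels d e j = d (e j) :=
  dif_pos j.isLt

lemma discountLevels_self (e : Fin n → ℝ) : discountLevels d e n = 0 :=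
  dif_neg (lt_irrefl n)

lemma antitone_discountLevels (hd : IsDiscount d) (e : Fin n ↪o ℝ) (he : ∀ j, 0 ≤ e j) :
    Antitone (discountLevels d e) := by
  intro j k hjk
  simp only [discountLevels]
  split_ifs with hk hj hj
  · exact hd.1.antitoneOn (he _) (he _) (e.monotone hjk)
  · omega
  · exact (hd.2 _ (he _)).le
  · exact le_rfl

lemma le_apply_iff_of_mem_Ioc_discountLevels (hd : IsDiscount d) (e : Fin n ↪o ℝ)
    (he : ∀ j, 0 ≤ e j) {k : ℕ} (hk : k < n) {s : ℝ}
    (hs : s ∈ Ioc (discountLevels d e (k + 1)) (discountLevels d e k)) (j : Fin n) :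
    s ≤ d (e j) ↔ e j ≤ e ⟨k, hk⟩ := by
  have hu := antitone_discountLevels hd e he
  rw [← discountLevels_fin (d := d) e j, e.le_iff_le]
  constructor
  · intro h
    by_contra hkj
    exact (hs.1.trans_le h).not_ge (hu (Nat.succ_le_of_lt (not_le.1 hkj)))
  · exact fun hjk => hs.2.trans (hu hjk)

lemma lt_of_discountLevels_zero_lt (hd : IsDiscount d) (e : Fin n ↪o ℝ) (he : ∀ j, 0 ≤ e j)
    {s : ℝ} (hs : discountLevels d e 0 < s) (j : Fin n) : d (e j) < s :=
  discountLevels_fin (d := d) e j ▸ (antitone_discountLevels hd e he (Nat.zero_le j)).trans_lt hs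

end DiscountLevels

lemma layer_sub_eq_cumul_sub {d : ℝ → ℝ} (hd : IsDiscount d) {x y : PayStream} {n : ℕ}
    (e : Fin n ↪o ℝ) (he : ∀ j, 0 ≤ e j) (hx : ↑x.m.support ⊆ range e)
    (hy : ↑y.m.support ⊆ range e) {k : ℕ} (hk : k < n) {s : ℝ}
    (hs : s ∈ Ioc (discountLevels d e (k + 1)) (discountLevels d e k)) :
    layer d (x.m - y.m) s = x.cumul (e ⟨k, hk⟩) - y.cumul (e ⟨k, hk⟩) := by
  set T := (univ : Finset (Fin n)).map e.toEmbedding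
  have hT : ∀ {z : ℝ →₀ ℝ}, ↑z.support ⊆ range e → z.support ⊆ T := fun h t ht => by
    obtain ⟨j, rfl⟩ := h ht
    exact mem_map_of_mem _ (mem_univ j)
  have hlevel : ∀ t ∈ T, s ≤ d t ↔ t ≤ e ⟨k, hk⟩ := fun t ht => by
    obtain ⟨j, -, rfl⟩ := mem_map.1 ht
    exact le_apply_iff_of_mem_Ioc_discountLevels hd e he hk hs j
  have hs0 : 0 < s := (discountLevels_self (d := d) e ▸
    antitone_discountLevels hd e he (Nat.succ_le_of_lt hk)).trans_lt hs.1
  rw [map_sub, Pi.sub_apply, layer_eq_sum_filter d (hT hx) hs0, layer_eq_sum_filter d (hT hy) hs0,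
    filter_congr hlevel, x.cumul_eq_sum_filter (hT hx), y.cumul_eq_sum_filter (hT hy)]

lemma dCPF_eq_cpfIntegral {d : ℝ → ℝ} (hd : IsDiscount d) (x y : PayStream) :
    PayStream.dCPF d x y = cpfIntegral d (x.m - y.m) := by
  set G := x.m.support ∪ y.m.support ∪ {0}
  set L := G.sort (· ≤ ·)
  set n := L.length
  set e := G.orderEmbOfFin (length_sort (· ≤ ·)).symm
  set u := discountLevels d e
  have hrange : range e = G := range_orderEmbOfFin G _
  have he : ∀ j, 0 ≤ e j := fun j => by
    have hj : e j ∈ G := by rw [← mem_coe, ← hrange]; exact mem_range_self j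
    simp only [G, Finset.mem_union, Finset.mem_singleton] at hj
    rcases hj with (ht | ht) | ht
    exacts [x.nonneg_of_mem_support ht, y.nonneg_of_mem_support ht, ht.ge]
  have hx : ↑x.m.support ⊆ range e := by
    rw [hrange]; exact coe_subset.2 (subset_union_left.trans subset_union_left)
  have hy : ↑y.m.support ⊆ range e := by
    rw [hrange]; exact coe_subset.2 (subset_union_right.trans subset_union_left)
  have hget : ∀ k (hk : k < n), L.getD k 0 = e ⟨k, hk⟩ := fun k hk => by
    rw [List.getD_eq_getElem _ _ hk, orderEmbOfFin_apply]
    rfl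
  have hstep : ∀ k < n, ∀ s ∈ Ioc (u (k + 1)) (u k),
      |layer d (x.m - y.m) s| = |x.cumul (L.getD k 0) - y.cumul (L.getD k 0)| :=
    fun k hk s hs => by rw [layer_sub_eq_cumul_sub hd e he hx hy hk hs, hget k hk]
  have hzero : ∀ s, u 0 < s → |layer d (x.m - y.m) s| = 0 := fun s hs => by
    refine abs_eq_zero.2 (layer_eq_zero_of_lt fun t ht => ?_)
    have hsupp : ↑(x.m - y.m).support ⊆ range e := by
      rw [hrange]; exact coe_subset.2 (Finsupp.support_sub.trans subset_union_left)
    obtain ⟨j, rfl⟩ := hsupp ht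
    exact lt_of_discountLevels_zero_lt hd e he hs j
  show ∑ k ∈ range n, |x.cumul (L.getD k 0) - y.cumul (L.getD k 0)| *
      (d (L.getD k 0) - if k + 1 < n then d (L.getD (k + 1) 0) else 0) = _
  rw [cpfIntegral, setIntegral_Ioi_zero_eq_sum_of_step (antitone_discountLevels hd e he)
    (discountLevels_self e) (integrableOn_layer d _).abs hstep hzero]
  refine sum_congr rfl fun k hk => ?_
  have hk : k < n := mem_range.1 hk
  have huk : u k = d (L.getD k 0) := by rw [hget k hk]; exact dif_pos hk
  have huk1 : u (k + 1) = if k + 1 < n then d (L.getD (k + 1) 0) else 0 := by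
    split_ifs with hk1
    · rw [hget _ hk1]; exact dif_pos hk1
    · exact dif_neg hk1
  rw [← huk, ← huk1]

lemma MonotoneOn.map_div_le_map_div {H : ℝ → ℝ} (hH : MonotoneOn H (Icc 0 1)) {a c c' : ℝ}
    (ha : 0 ≤ a) (hac : a ≤ c) (hcc' : c ≤ c') : H (a / c') ≤ H (a / c) := by
  rcases ha.eq_or_lt with rfl | ha
  · simp
  have hc := ha.trans_le hac
  have hc' := hc.trans_le hcc'
  exact hH ⟨by positivity, (div_le_one hc').2 (hac.trans hcc')⟩
    ⟨by positivity, (div_le_one hc).2 hac⟩ (div_le_div_of_nonneg_left ha.le hc hcc')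

end

theorem stmt_10_general (x y : PayStream)
    (hx : ∀ t, 0 ≤ x.m t) (hy : ∀ t, 0 ≤ y.m t)
    (d : ℝ → ℝ) (hd : IsDiscount d)
    (H : ℝ → ℝ)
    (hHm : StrictMonoOn H (Set.Icc 0 1)) :
    ∃ b : (WithTop ℝ × WithTop ℝ) →₀ ℝ, IsJointPayoff x y b ∧
      jointVal H d b =
        H (|PayStream.DU d x - PayStream.DU d y| / PayStream.dCPF d x y) ∧
      ∀ b' : (WithTop ℝ × WithTop ℝ) →₀ ℝ, IsJointPayoff x y b' →
        jointVal H d b' ≤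
          H (|PayStream.DU d x - PayStream.DU d y| / PayStream.dCPF d x y) := by
  obtain ⟨b, hb, hcost⟩ :=
    hasCouplingWithinCPF_of_isNonnegStream hd ⟨hx, x.zero_of_neg⟩ ⟨hy, y.zero_of_neg⟩
  have hval : ∀ b', IsCoupling b' x.m y.m →
      jointVal H d b' = H (|PayStream.DU d x - PayStream.DU d y| / transportCost d b') :=
    fun b' hb' => by rw [jointVal, hb'.sum_mul_dext_sub]; rfl
  have hopt : transportCost d b = PayStream.dCPF d x y := by
    rw [dCPF_eq_cpfIntegral hd]
    exact le_antisymm hcost (hb.cpfIntegral_le_transportCost d)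
  refine ⟨b, isJointPayoff_iff.2 hb, by rw [hval b hb, hopt], fun b' hb' => ?_⟩
  rw [isJointPayoff_iff] at hb'
  rw [hval b' hb', ← hopt]
  refine hHm.monotoneOn.map_div_le_map_div (abs_nonneg _) ?_ ?_
  · exact hb.sum_mul_dext_sub d ▸ abs_sum_mul_dext_sub_le_transportCost d b
  · exact hopt ▸ (dCPF_eq_cpfIntegral hd x y).symm ▸ hb'.cpfIntegral_le_transportCost d

/-- Proposition 8 — for positively-valued payoff streams, the maximal
L1 ease of comparison over joint payoff functions is attained and equals the
generalized CPF-complexity value. -/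
theorem stmt_10 (x y : PayStream) (hxy : x ≠ y)
    (hx : ∀ t, 0 ≤ x.m t) (hy : ∀ t, 0 ≤ y.m t)
    (d : ℝ → ℝ) (hd : IsDiscount d)
    (H : ℝ → ℝ) (hHc : ContinuousOn H (Set.Icc 0 1))
    (hHm : StrictMonoOn H (Set.Icc 0 1)) (hH0 : H 0 = 0) :
    ∃ b : (WithTop ℝ × WithTop ℝ) →₀ ℝ, IsJointPayoff x y b ∧
      jointVal H d b =
        H (|PayStream.DU d x - PayStream.DU d y| / PayStream.dCPF d x y) ∧
      ∀ b' : (WithTop ℝ × WithTop ℝ) →₀ ℝ, IsJointPayoff x y b' →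
        jointVal H d b' ≤
          H (|PayStream.DU d x - PayStream.DU d y| / PayStream.dCPF d x y) :=
  stmt_10_general x y hx hy d hd H hHm
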